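/- arXiv:1808.05408 — 2 statements merged into one kernel-verified Lean document; each statement's English description precedes it below -/
import Mathlib

section
/- Suppose f : ℝ^n × ℝ^n → ℝ^n is L-Lipschitz in its first argument (uniformly in the second) and its Jacobian with respect to the second argument has symmetric part with minimum eigenvalue at least J̲ > 0 on a convex input set U. Let z(t) = e(t) − ē(t) where ė = f(e + x_des, u) + w, ē̇ = f(ē + x_des, ū), with ‖w(t)‖ ≤ w̃, u = ū − k z, and gain k = k̲ + (1/J̲)(L + 1/(4ρ)) for constants k̲, ρ > 0. Then for every t, d/dt (½‖z(t)‖²) ≤ −k̲ J̲ ‖z(t)‖² + ρ w̃². -/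
/-!
Along the segment from `ubar t` to `u t = ubar t - k z`, the mean value theorem and the
eigenvalue bound on the input Jacobian make `f x` strongly monotone with modulus `Jlow`, so the
feedback contributes `-k Jlow ‖z‖²` to `d/dt (½‖z‖²) = ⟪z, ż⟫`. The state mismatch contributes at
most `L ‖z‖²` (Lipschitz), the disturbance at most `‖z‖² / (4ρ) + ρ wmax²` (Young), and the gain
`k` is chosen exactly so that `L + 1 / (4ρ)` is absorbed, leaving `-klow Jlow ‖z‖²`.
-/

open Set
open scoped InnerProductSpace

section InnerProductSpace

variable {E : Type*} [NormedAddCommGroup E] [InnerProductSpace ℝ E]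

theorem real_inner_le_norm_sq_div_add_mul_sq {z w : E} {W ρ : ℝ} (hw : ‖w‖ ≤ W) (hρ : 0 < ρ) :
    ⟪z, w⟫_ℝ ≤ ‖z‖ ^ 2 / (4 * ρ) + ρ * W ^ 2 := by
  have hzW : ‖z‖ * W ≤ ‖z‖ ^ 2 / (4 * ρ) + ρ * W ^ 2 := by
    rw [div_add' _ _ _ (by positivity), le_div_iff₀ (by positivity)]
    nlinarith [sq_nonneg (‖z‖ - 2 * ρ * W)]
  calc ⟪z, w⟫_ℝ ≤ ‖z‖ * ‖w‖ := real_inner_le_norm z w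
    _ ≤ ‖z‖ * W := by gcongr
    _ ≤ _ := hzW

theorem Convex.mul_norm_sq_le_inner_sub_of_hasFDerivWithinAt {U : Set E} (hU : Convex ℝ U)
    {g : E → E} {g' : E → E →L[ℝ] E} {m : ℝ}
    (hg : ∀ u ∈ U, HasFDerivWithinAt g (g' u) U u)
    (hm : ∀ u ∈ U, ∀ v, m * ‖v‖ ^ 2 ≤ ⟪v, g' u v⟫_ℝ) {a b : E} (ha : a ∈ U) (hb : b ∈ U) :
    m * ‖b - a‖ ^ 2 ≤ ⟪b - a, g b - g a⟫_ℝ := by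
  set v := b - a
  have hseg : ∀ s ∈ Icc (0 : ℝ) 1, a + s • v ∈ U := fun s hs => hU.add_smul_sub_mem ha hb hs
  have hderiv : ∀ s ∈ Icc (0 : ℝ) 1, HasDerivWithinAt (fun s : ℝ => ⟪v, g (a + s • v)⟫_ℝ)
      ⟪v, g' (a + s • v) v⟫_ℝ (Icc 0 1) s := by
    intro s hs
    have hline : HasDerivWithinAt (fun s : ℝ => a + s • v) v (Icc 0 1) s := by
      simpa using ((hasDerivAt_id s).smul_const v).const_add a |>.hasDerivWithinAt
    simpa using (hasDerivWithinAt_const s _ v).inner ℝ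
      ((hg _ (hseg s hs)).comp_hasDerivWithinAt s hline hseg)
  have hderiv_interior : ∀ s ∈ interior (Icc (0 : ℝ) 1),
      HasDerivAt (fun s : ℝ => ⟪v, g (a + s • v)⟫_ℝ) ⟪v, g' (a + s • v) v⟫_ℝ s := by
    intro s hs
    rw [interior_Icc] at hs
    exact (hderiv s (Ioo_subset_Icc_self hs)).hasDerivAt (Icc_mem_nhds hs.1 hs.2)
  have hmvt := (convex_Icc (0 : ℝ) 1).mul_sub_le_image_sub_of_le_deriv
    (fun s hs => (hderiv s hs).continuousWithinAt)
    (fun s hs => (hderiv_interior s hs).differentiableAt.differentiableWithinAt)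
    (fun s hs => (hderiv_interior s hs).deriv ▸ hm _ (hseg s (interior_subset hs)) v)
    0 (left_mem_Icc.2 zero_le_one) 1 (right_mem_Icc.2 zero_le_one) zero_le_one
  simpa [v, inner_sub_right] using hmvt

end InnerProductSpace

theorem stmt_9_general {n : ℕ}
    (f : EuclideanSpace ℝ (Fin n) → EuclideanSpace ℝ (Fin n) → EuclideanSpace ℝ (Fin n))
    (U : Set (EuclideanSpace ℝ (Fin n))) (hU : Convex ℝ U)
    (L Jlow ρ klow wmax : ℝ) (hL : 0 < L) (hJlow : 0 < Jlow) (hρ : 0 < ρ)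
    (hklow : 0 < klow)
    -- f is L-Lipschitz in its first argument, uniformly in the second
    (hLip : ∀ x x' u : EuclideanSpace ℝ (Fin n), ‖f x u - f x' u‖ ≤ L * ‖x - x'‖)
    -- input Jacobian on U, with symmetric part having eigenvalues ≥ Jlow
    (J : EuclideanSpace ℝ (Fin n) → EuclideanSpace ℝ (Fin n) →
      (EuclideanSpace ℝ (Fin n) →L[ℝ] EuclideanSpace ℝ (Fin n)))
    (hJ : ∀ x : EuclideanSpace ℝ (Fin n), ∀ u ∈ U, HasFDerivWithinAt (f x) (J x u) U u)
    (heig : ∀ x : EuclideanSpace ℝ (Fin n), ∀ u ∈ U, ∀ v : EuclideanSpace ℝ (Fin n),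
      Jlow * ‖v‖ ^ 2 ≤ (inner ℝ v (J x u v) : ℝ))
    (xdes : EuclideanSpace ℝ (Fin n))
    (e ebar : ℝ → EuclideanSpace ℝ (Fin n))
    (u ubar w : ℝ → EuclideanSpace ℝ (Fin n))
    (k : ℝ) (hk : k = klow + (1 / Jlow) * (L + 1 / (4 * ρ)))
    (hwb : ∀ t : ℝ, ‖w t‖ ≤ wmax)
    (huU : ∀ t : ℝ, u t ∈ U) (hubarU : ∀ t : ℝ, ubar t ∈ U)
    (hfb : ∀ t : ℝ, u t = ubar t - k • (e t - ebar t))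
    (he : ∀ t : ℝ, HasDerivAt e (f (e t + xdes) (u t) + w t) t)
    (hebar : ∀ t : ℝ, HasDerivAt ebar (f (ebar t + xdes) (ubar t)) t) :
    ∀ t : ℝ, deriv (fun s => (1 / 2 : ℝ) * ‖e s - ebar s‖ ^ 2) t ≤
      -(klow * Jlow) * ‖e t - ebar t‖ ^ 2 + ρ * wmax ^ 2 := by
  intro t
  set z := e t - ebar t
  set x := ebar t + xdes
  have hderiv : deriv (fun s => (1 / 2 : ℝ) * ‖e s - ebar s‖ ^ 2) t
      = ⟪z, f (e t + xdes) (u t) - f x (u t)⟫_ℝ + ⟪z, f x (u t) - f x (ubar t)⟫_ℝ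
        + ⟪z, w t⟫_ℝ := by
    refine (((he t).sub (hebar t)).norm_sq.const_mul (1 / 2)).deriv.trans ?_
    simp only [Pi.sub_apply, inner_sub_right, inner_add_right]
    ring
  have hlip : ⟪z, f (e t + xdes) (u t) - f x (u t)⟫_ℝ ≤ L * ‖z‖ ^ 2 :=
    calc _ ≤ ‖z‖ * ‖f (e t + xdes) (u t) - f x (u t)‖ := real_inner_le_norm _ _
      _ ≤ ‖z‖ * (L * ‖z‖) := by
          gcongr
          simpa [x, z] using hLip (e t + xdes) x (u t)
      _ = L * ‖z‖ ^ 2 := by ring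
  have hfeedback : ⟪z, f x (u t) - f x (ubar t)⟫_ℝ ≤ -(k * Jlow) * ‖z‖ ^ 2 := by
    have hk_pos : 0 < k := by rw [hk]; positivity
    have hmono := hU.mul_norm_sq_le_inner_sub_of_hasFDerivWithinAt (hJ x) (heig x)
      (hubarU t) (huU t)
    rw [show u t - ubar t = -k • z by rw [hfb t]; module, norm_smul, inner_smul_left] at hmono
    simp only [norm_neg, Real.norm_of_nonneg hk_pos.le, conj_trivial] at hmono
    refine le_of_mul_le_mul_left ?_ hk_pos
    linarith
  have hyoung := real_inner_le_norm_sq_div_add_mul_sq (z := z) (hwb t) hρ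
  have hkJ : k * Jlow = klow * Jlow + L + 1 / (4 * ρ) := by
    rw [hk]; field_simp; ring
  calc _ ≤ L * ‖z‖ ^ 2 + -(k * Jlow) * ‖z‖ ^ 2 + (‖z‖ ^ 2 / (4 * ρ) + ρ * wmax ^ 2) := by
        rw [hderiv]; linarith
    _ = _ := by rw [hkJ]; ring

theorem stmt_9 {n : ℕ}
    (f : EuclideanSpace ℝ (Fin n) → EuclideanSpace ℝ (Fin n) → EuclideanSpace ℝ (Fin n))
    (U : Set (EuclideanSpace ℝ (Fin n))) (hU : Convex ℝ U)
    (L Jlow ρ klow wmax : ℝ) (hL : 0 < L) (hJlow : 0 < Jlow) (hρ : 0 < ρ)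
    (hklow : 0 < klow) (hwmax : 0 ≤ wmax)
    -- f is L-Lipschitz in its first argument, uniformly in the second
    (hLip : ∀ x x' u : EuclideanSpace ℝ (Fin n), ‖f x u - f x' u‖ ≤ L * ‖x - x'‖)
    -- input Jacobian on U, with symmetric part having eigenvalues ≥ Jlow
    (J : EuclideanSpace ℝ (Fin n) → EuclideanSpace ℝ (Fin n) →
      (EuclideanSpace ℝ (Fin n) →L[ℝ] EuclideanSpace ℝ (Fin n)))
    (hJ : ∀ x : EuclideanSpace ℝ (Fin n), ∀ u ∈ U, HasFDerivWithinAt (f x) (J x u) U u)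
    (heig : ∀ x : EuclideanSpace ℝ (Fin n), ∀ u ∈ U, ∀ v : EuclideanSpace ℝ (Fin n),
      Jlow * ‖v‖ ^ 2 ≤ (inner ℝ v (J x u v) : ℝ))
    (xdes : EuclideanSpace ℝ (Fin n))
    (e ebar : ℝ → EuclideanSpace ℝ (Fin n))
    (u ubar w : ℝ → EuclideanSpace ℝ (Fin n))
    (k : ℝ) (hk : k = klow + (1 / Jlow) * (L + 1 / (4 * ρ)))
    (hwb : ∀ t : ℝ, ‖w t‖ ≤ wmax)
    (huU : ∀ t : ℝ, u t ∈ U) (hubarU : ∀ t : ℝ, ubar t ∈ U)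
    (hfb : ∀ t : ℝ, u t = ubar t - k • (e t - ebar t))
    (he : ∀ t : ℝ, HasDerivAt e (f (e t + xdes) (u t) + w t) t)
    (hebar : ∀ t : ℝ, HasDerivAt ebar (f (ebar t + xdes) (ubar t)) t) :
    ∀ t : ℝ, deriv (fun s => (1 / 2 : ℝ) * ‖e s - ebar s‖ ^ 2) t ≤
      -(klow * Jlow) * ‖e t - ebar t‖ ^ 2 + ρ * wmax ^ 2 :=
  stmt_9_general f U hU L Jlow ρ klow wmax hL hJlow hρ hklow hLip J hJ heig xdes e ebar u ubar w k
    hk hwb huU hubarU hfb he hebar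
end

section
/- Under the hypotheses of the tube lemma (the feedback u = ū − kz with k = k̲ + (1/J̲)(L + 1/(4ρ)) and z(0) = 0, disturbance bound ‖w(t)‖ ≤ w̃), the deviation satisfies ‖z(t)‖ ≤ z̃ := √ρ · w̃ / √(k̲ J̲) for all t ≥ 0; that is, the ball {z : ‖z‖ ≤ z̃} is robust invariant for the deviation dynamics. -/
/-!
With `φ = ‖z‖²`, the closed-loop deviation satisfies `φ' ≤ -2 k̲ J̲ φ + 2 ρ w̃²`: the gain `k` is
chosen so that the strong monotonicity of `f` in its input absorbs both the Lipschitz term and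
the Young-inequality term of the disturbance. Since `φ 0 = 0`, the sublevel set
`{φ ≤ ρ w̃² / (k̲ J̲)}` is forward invariant.
-/

open Set Real

/-- The integrating factor `exp (c t)` turns `φ' ≤ -c φ + d` into the antitonicity of
`exp (c t) * (φ t - d / c)`. -/
theorem le_div_of_hasDerivAt_le_neg_mul_add {φ φ' : ℝ → ℝ} {c d a t : ℝ} (hc : c ≠ 0)
    (hφ : ∀ s, HasDerivAt φ (φ' s) s) (hbound : ∀ s, φ' s ≤ -c * φ s + d)
    (ha : φ a ≤ d / c) (hat : a ≤ t) : φ t ≤ d / c := by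
  set ψ : ℝ → ℝ := fun s => exp (c * s) * (φ s - d / c)
  have hψ : ∀ s, HasDerivAt ψ (exp (c * s) * c * (φ s - d / c) + exp (c * s) * φ' s) s :=
    fun s => (((hasDerivAt_id s).const_mul c).exp.congr_deriv (by simp [mul_comm])).mul
      ((hφ s).sub_const _)
  have hψ_anti : Antitone ψ := antitone_of_hasDerivAt_nonpos hψ fun s => by
    have hcd : c * (d / c) = d := mul_div_cancel₀ d hc
    simp only [Pi.zero_apply]
    nlinarith [hbound s, exp_pos (c * s)]
  have hψt : ψ t ≤ 0 := (hψ_anti hat).trans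
    (mul_nonpos_of_nonneg_of_nonpos (exp_pos _).le (sub_nonpos.2 ha))
  exact sub_nonpos.1 (nonpos_of_mul_nonpos_right hψt (exp_pos _))

section InnerProductSpace

variable {E : Type*} [NormedAddCommGroup E] [InnerProductSpace ℝ E]

/-- Strong monotonicity from the derivative: `s ↦ ⟪b - a, g (a + s • (b - a))⟫ - m ‖b - a‖² s`
is monotone on `[0, 1]`. -/
theorem Convex.mul_norm_sub_sq_le_inner_sub {g : E → E} {J : E → E →L[ℝ] E} {U : Set E}
    {m : ℝ} (hU : Convex ℝ U) (hg : ∀ u ∈ U, HasFDerivWithinAt g (J u) U u)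
    (hJ : ∀ u ∈ U, ∀ v, m * ‖v‖ ^ 2 ≤ inner ℝ v (J u v)) {a b : E} (ha : a ∈ U)
    (hb : b ∈ U) : m * ‖b - a‖ ^ 2 ≤ inner ℝ (b - a) (g b - g a) := by
  set v := b - a
  set γ : ℝ → E := fun s => a + s • v
  have hγU : MapsTo γ (Icc 0 1) U := fun s hs => hU.add_smul_sub_mem ha hb hs
  set h : ℝ → ℝ := fun s => inner ℝ v (g (γ s)) - m * ‖v‖ ^ 2 * s
  have hh : ∀ s ∈ Icc (0 : ℝ) 1, HasDerivWithinAt h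
      (inner ℝ v (J (γ s) v) - m * ‖v‖ ^ 2) (Icc 0 1) s := by
    intro s hs
    have hγ : HasDerivWithinAt γ v (Icc 0 1) s := by
      simpa only [one_smul] using
        (((hasDerivAt_id' s).smul_const v).const_add a).hasDerivWithinAt
    have hgγ := (hg (γ s) (hγU hs)).comp_hasDerivWithinAt s hγ hγU
    exact ((hasDerivWithinAt_const s _ v).inner ℝ hgγ).sub
      ((hasDerivWithinAt_id s _).const_mul (m * ‖v‖ ^ 2)) |>.congr_deriv
      (by rw [inner_zero_left, add_zero, mul_one])
  have hh_mono : MonotoneOn h (Icc 0 1) :=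
    monotoneOn_of_hasDerivWithinAt_nonneg (convex_Icc 0 1)
      (fun s hs => (hh s hs).continuousWithinAt)
      (fun s hs => (hh s (interior_subset hs)).mono interior_subset)
      (fun s hs => sub_nonneg.2 (hJ _ (hγU (interior_subset hs)) v))
  have h01 := hh_mono (left_mem_Icc.2 zero_le_one) (right_mem_Icc.2 zero_le_one) zero_le_one
  simp only [h, γ, zero_smul, add_zero, one_smul, v, add_sub_cancel, mul_zero, sub_zero,
    mul_one] at h01
  rw [inner_sub_right]
  linarith

/-- The Lyapunov derivative bound for the feedback `u = u' - k (x - x')`: the Lipschitz term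
costs `L`, Young's inequality `⟪z, w⟫ ≤ ‖z‖² / (4ρ) + ρ ‖w‖²` costs `1 / (4ρ)`, and strong
monotonicity in the input gains `k m`. -/
theorem inner_sub_le_of_feedback (f : E → E → E) {L m ρ k : ℝ} (hρ : 0 < ρ) (hk : 0 < k)
    {x x' u u' w : E} (hLip : ‖f x u - f x' u‖ ≤ L * ‖x - x'‖)
    (hmono : m * ‖u - u'‖ ^ 2 ≤ inner ℝ (u - u') (f x' u - f x' u'))
    (hfb : u = u' - k • (x - x')) :
    inner ℝ (x - x') (f x u + w - f x' u') ≤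
      (L + 1 / (4 * ρ) - k * m) * ‖x - x'‖ ^ 2 + ρ * ‖w‖ ^ 2 := by
  set z := x - x'
  have hlip : inner ℝ z (f x u - f x' u) ≤ L * ‖z‖ ^ 2 := by
    have := mul_le_mul_of_nonneg_left hLip (norm_nonneg z)
    nlinarith [real_inner_le_norm z (f x u - f x' u)]
  have hinput : inner ℝ z (f x' u - f x' u') ≤ -(k * m) * ‖z‖ ^ 2 := by
    have hdu : u - u' = -(k • z) := by rw [hfb]; abel
    rw [hdu, norm_neg, norm_smul, inner_neg_left, real_inner_smul_left, Real.norm_eq_abs,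
      abs_of_pos hk] at hmono
    nlinarith
  have hyoung : inner ℝ z w ≤ 1 / (4 * ρ) * ‖z‖ ^ 2 + ρ * ‖w‖ ^ 2 := by
    have := two_mul_le_add_mul_sq (a := ‖z‖) (b := ‖w‖) (inv_pos.2 (mul_pos two_pos hρ))
    have h4 : (2 * ρ)⁻¹ = 2 * (1 / (4 * ρ)) := by field_simp; ring
    rw [inv_inv, h4] at this
    nlinarith [real_inner_le_norm z w]
  have hsplit : f x u + w - f x' u' = (f x u - f x' u) + (f x' u - f x' u') + w := by abel
  rw [hsplit, inner_add_right, inner_add_right]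
  linarith

end InnerProductSpace

theorem stmt_10 {n : ℕ}
    (f : EuclideanSpace ℝ (Fin n) → EuclideanSpace ℝ (Fin n) → EuclideanSpace ℝ (Fin n))
    (U : Set (EuclideanSpace ℝ (Fin n))) (hU : Convex ℝ U)
    (L Jlow ρ klow wmax : ℝ) (hL : 0 < L) (hJlow : 0 < Jlow) (hρ : 0 < ρ)
    (hklow : 0 < klow) (hwmax : 0 ≤ wmax)
    -- f is L-Lipschitz in its first argument, uniformly in the second
    (hLip : ∀ x x' u : EuclideanSpace ℝ (Fin n), ‖f x u - f x' u‖ ≤ L * ‖x - x'‖)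
    -- input Jacobian on U, with symmetric part having eigenvalues ≥ Jlow
    (J : EuclideanSpace ℝ (Fin n) → EuclideanSpace ℝ (Fin n) →
      (EuclideanSpace ℝ (Fin n) →L[ℝ] EuclideanSpace ℝ (Fin n)))
    (hJ : ∀ x : EuclideanSpace ℝ (Fin n), ∀ u ∈ U, HasFDerivWithinAt (f x) (J x u) U u)
    (heig : ∀ x : EuclideanSpace ℝ (Fin n), ∀ u ∈ U, ∀ v : EuclideanSpace ℝ (Fin n),
      Jlow * ‖v‖ ^ 2 ≤ (inner ℝ v (J x u v) : ℝ))
    (xdes : EuclideanSpace ℝ (Fin n))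
    (e ebar : ℝ → EuclideanSpace ℝ (Fin n))
    (u ubar w : ℝ → EuclideanSpace ℝ (Fin n))
    (k : ℝ) (hk : k = klow + (1 / Jlow) * (L + 1 / (4 * ρ)))
    (hwb : ∀ t : ℝ, ‖w t‖ ≤ wmax)
    (huU : ∀ t : ℝ, u t ∈ U) (hubarU : ∀ t : ℝ, ubar t ∈ U)
    (hfb : ∀ t : ℝ, u t = ubar t - k • (e t - ebar t))
    (he : ∀ t : ℝ, HasDerivAt e (f (e t + xdes) (u t) + w t) t)
    (hebar : ∀ t : ℝ, HasDerivAt ebar (f (ebar t + xdes) (ubar t)) t)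
    (h0 : e 0 = ebar 0) :
    ∀ t ≥ (0 : ℝ), ‖e t - ebar t‖ ≤ Real.sqrt ρ * wmax / Real.sqrt (klow * Jlow) := by
  intro T hT
  set c := klow * Jlow
  have hc : 0 < c := mul_pos hklow hJlow
  have hk_pos : 0 < k := by rw [hk]; positivity
  have hkJ : L + 1 / (4 * ρ) - k * Jlow = -c := by rw [hk]; field_simp; ring
  have hφ (t : ℝ) : HasDerivAt (fun s => ‖e s - ebar s‖ ^ 2) (2 * inner ℝ (e t - ebar t)
      (f (e t + xdes) (u t) + w t - f (ebar t + xdes) (ubar t))) t :=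
    ((he t).sub (hebar t)).norm_sq
  have hbound (t : ℝ) : 2 * inner ℝ (e t - ebar t) (f (e t + xdes) (u t) + w t -
      f (ebar t + xdes) (ubar t)) ≤ -(2 * c) * ‖e t - ebar t‖ ^ 2 + 2 * ρ * wmax ^ 2 := by
    have hdev := inner_sub_le_of_feedback f hρ hk_pos (w := w t)
      (hLip (e t + xdes) (ebar t + xdes) (u t))
      (hU.mul_norm_sub_sq_le_inner_sub (hJ (ebar t + xdes)) (heig _) (hubarU t) (huU t))
      (by rw [hfb t, add_sub_add_right_eq_sub])
    rw [add_sub_add_right_eq_sub, hkJ] at hdev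
    nlinarith [pow_le_pow_left₀ (norm_nonneg _) (hwb t) 2]
  have hsq : ‖e T - ebar T‖ ^ 2 ≤ 2 * ρ * wmax ^ 2 / (2 * c) :=
    le_div_of_hasDerivAt_le_neg_mul_add (φ := fun s => ‖e s - ebar s‖ ^ 2) (a := 0)
      (mul_pos two_pos hc).ne' hφ hbound (by rw [h0, sub_self, norm_zero, zero_pow two_ne_zero]; positivity) hT
  rw [← sqrt_sq hwmax, ← sqrt_mul hρ.le, ← sqrt_div' _ hc.le]
  exact le_sqrt_of_sq_le (by rwa [mul_assoc, mul_div_mul_left _ _ two_ne_zero] at hsq)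
end
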